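/- Let R = {r_1,…,r_n} and D = {d_1,…,d_n} be n i.i.d. uniform points each on [0,ℓ]. There exist constants C₁ ≥ C₂ > 0 such that for all n ≥ 1, C₂·ℓ·√n ≤ E[min over perfect matchings M of ∑_{(r,d)∈M} |r−d|] ≤ C₁·ℓ·√n. -/

import Mathlib

/-!
Write `M` for the minimal matching cost. Every permutation costs at least
`|∑ rᵢ - ∑ dᵢ| = |D|`, where `D` is a difference of two sums of `n` i.i.d. centred variables
(the points shifted by `ℓ / 2`). Expanding binomially and using independence, `E D² = n ℓ² / 6`
and `E D⁴ ≤ 3 (E D²)²`, and an interpolation between the first, second and fourth moments then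
gives `E |D| ≥ √(E D² / 3) = ℓ √(n / 18)`.

Matching both samples in increasing order costs `∫₀^ℓ |Nₜ| dt`, where `Nₜ` is the number of
riders minus the number of drivers in `[0, t]`. For fixed `t`, `Nₜ` is again a difference of two
sums of `n` i.i.d. centred variables, now of variance `p (1 - p) ≤ 1 / 4`, so
`E |Nₜ| ≤ √(E Nₜ²) ≤ √(n / 2)`; integrating over `t` gives `E M ≤ ℓ √(n / 2)`.
-/

open MeasureTheory

/-- The uniform probability measure on `[0, ℓ]`. -/
noncomputable def unif (ℓ : ℝ) : Measure ℝ :=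
  (ENNReal.ofReal ℓ)⁻¹ • volume.restrict (Set.Icc 0 ℓ)

open Finset ProbabilityTheory

theorem integrable_pow_of_abs_le {Ω : Type*} [MeasurableSpace Ω] {μ : Measure Ω}
    [IsFiniteMeasure μ] {f : Ω → ℝ} {c : ℝ} (hf : Measurable f) (hfc : ∀ x, |f x| ≤ c) (k : ℕ) :
    Integrable (fun x => f x ^ k) μ :=
  .of_bound (hf.pow_const k).aestronglyMeasurable (c ^ k) <| ae_of_all _ fun x => by
    rw [norm_pow, Real.norm_eq_abs]
    exact pow_le_pow_left₀ (abs_nonneg _) (hfc x) k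

section Sums

variable {α : Type*} {g : α → ℝ} {c : ℝ} {n : ℕ}

theorem abs_sum_comp_le (hgc : ∀ a, |g a| ≤ c) (x : Fin n → α) : |∑ i, g (x i)| ≤ n * c :=
  calc |∑ i, g (x i)| ≤ ∑ i, |g (x i)| := abs_sum_le_sum_abs _ _
    _ ≤ ∑ _i : Fin n, c := sum_le_sum fun i _ => hgc (x i)
    _ = n * c := by simp

theorem abs_sum_sub_sum_le (hgc : ∀ a, |g a| ≤ c) (x y : Fin n → α) :
    |∑ i, g (x i) - ∑ i, g (y i)| ≤ 2 * n * c := by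
  linarith [abs_sub (∑ i, g (x i)) (∑ i, g (y i)), abs_sum_comp_le hgc x, abs_sum_comp_le hgc y]

theorem sum_sub_sum_eq_add_sum_neg (x y : Fin n → α) :
    ∑ i, g (x i) - ∑ i, g (y i) = ∑ i, g (x i) + ∑ i, (-g) (y i) := by
  simp [sub_eq_add_neg]

end Sums

section ProductMoments

variable {α β : Type*} [MeasurableSpace α] [MeasurableSpace β] {μ : Measure α} {ν : Measure β}
  {u : α → ℝ} {v : β → ℝ}

theorem integral_add_pow_prod [SFinite μ] [SFinite ν]
    (hu : ∀ k : ℕ, Integrable (fun a => u a ^ k) μ) (hv : ∀ k : ℕ, Integrable (fun b => v b ^ k) ν)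
    (m : ℕ) :
    ∫ z, (u z.1 + v z.2) ^ m ∂μ.prod ν
      = ∑ j ∈ range (m + 1), (∫ a, u a ^ j ∂μ) * (∫ b, v b ^ (m - j) ∂ν) * m.choose j := by
  simp_rw [add_pow]
  rw [integral_finsetSum _ fun j _ => ((hu j).mul_prod (hv (m - j))).mul_const _]
  refine sum_congr rfl fun j _ => ?_
  rw [integral_mul_const, integral_prod_mul (fun a => u a ^ j) (fun b => v b ^ (m - j))]

variable [IsProbabilityMeasure μ] [IsProbabilityMeasure ν]

theorem integral_add_sq_prod (hu : ∀ k : ℕ, Integrable (fun a => u a ^ k) μ)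
    (hv : ∀ k : ℕ, Integrable (fun b => v b ^ k) ν) (hu0 : ∫ a, u a ∂μ = 0)
    (hv0 : ∫ b, v b ∂ν = 0) :
    ∫ z, (u z.1 + v z.2) ^ 2 ∂μ.prod ν = ∫ a, u a ^ 2 ∂μ + ∫ b, v b ^ 2 ∂ν := by
  simp [integral_add_pow_prod hu hv, sum_range_succ, hu0, hv0, add_comm]

theorem integral_add_pow_four_prod (hu : ∀ k : ℕ, Integrable (fun a => u a ^ k) μ)
    (hv : ∀ k : ℕ, Integrable (fun b => v b ^ k) ν) (hu0 : ∫ a, u a ∂μ = 0)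
    (hv0 : ∫ b, v b ∂ν = 0) :
    ∫ z, (u z.1 + v z.2) ^ 4 ∂μ.prod ν
      = ∫ a, u a ^ 4 ∂μ + 6 * (∫ a, u a ^ 2 ∂μ) * (∫ b, v b ^ 2 ∂ν) + ∫ b, v b ^ 4 ∂ν := by
  simp only [integral_add_pow_prod hu hv, Nat.reduceAdd, sum_range_succ, range_one, sum_singleton,
    pow_zero, integral_const, probReal_univ, smul_eq_mul, mul_one, tsub_zero, one_mul, Nat.choose,
    Nat.cast_one, pow_one, hu0, Nat.add_one_sub_one, zero_mul, add_zero, Nat.cast_ofNat,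
    Nat.reduceSub, hv0, mul_zero, tsub_self]
  ring

end ProductMoments

section SampleSums

variable {α : Type*} [MeasurableSpace α] {ν : Measure α}

theorem integral_pi_fin_succ [SigmaFinite ν] (n : ℕ) (F : (Fin (n + 1) → α) → ℝ) :
    ∫ x, F x ∂Measure.pi (fun _ => ν)
      = ∫ z, F (Fin.cons z.1 z.2) ∂ν.prod (Measure.pi fun _ : Fin n => ν) := by
  rw [← ((measurePreserving_piFinSuccAbove (fun _ => ν) 0).symm _).integral_comp' F]
  congr with z
  exact congrArg F (Fin.insertNth_zero' z.1 z.2)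

variable [IsProbabilityMeasure ν] {g : α → ℝ} {c : ℝ}

theorem integrable_sum_comp_pow (hg : Measurable g) (hgc : ∀ a, |g a| ≤ c) (n k : ℕ) :
    Integrable (fun x : Fin n → α => (∑ i, g (x i)) ^ k) (Measure.pi fun _ => ν) :=
  integrable_pow_of_abs_le (Finset.measurable_sum _ fun i _ => hg.comp (measurable_pi_apply i))
    (abs_sum_comp_le hgc) k

theorem integral_sum_comp_succ_pow (n k : ℕ) :
    ∫ x, (∑ i, g (x i)) ^ k ∂Measure.pi (fun _ : Fin (n + 1) => ν)
      = ∫ z, (g z.1 + ∑ i, g (z.2 i)) ^ k ∂ν.prod (Measure.pi fun _ : Fin n => ν) := by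
  rw [integral_pi_fin_succ]
  simp [Fin.sum_univ_succ]

theorem integral_sum_comp_eq_zero (hg : Measurable g) (hgc : ∀ a, |g a| ≤ c)
    (hg0 : ∫ a, g a ∂ν = 0) (n : ℕ) :
    ∫ x, ∑ i, g (x i) ∂Measure.pi (fun _ : Fin n => ν) = 0 := by
  induction n with
  | zero => simp
  | succ n ih =>
    have h := integral_add_pow_prod (integrable_pow_of_abs_le (μ := ν) hg hgc)
      (integrable_sum_comp_pow (ν := ν) hg hgc n) 1
    rw [← integral_sum_comp_succ_pow (ν := ν)] at h
    simpa [sum_range_succ, hg0, ih] using h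

theorem integral_sum_comp_sq (hg : Measurable g) (hgc : ∀ a, |g a| ≤ c)
    (hg0 : ∫ a, g a ∂ν = 0) (n : ℕ) :
    ∫ x, (∑ i, g (x i)) ^ 2 ∂Measure.pi (fun _ : Fin n => ν) = n * ∫ a, g a ^ 2 ∂ν := by
  induction n with
  | zero => simp
  | succ n ih =>
    rw [integral_sum_comp_succ_pow, integral_add_sq_prod (integrable_pow_of_abs_le hg hgc)
      (integrable_sum_comp_pow hg hgc n) hg0 (integral_sum_comp_eq_zero hg hgc hg0 n), ih]
    push_cast
    ring

theorem integral_sum_comp_pow_four (hg : Measurable g) (hgc : ∀ a, |g a| ≤ c)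
    (hg0 : ∫ a, g a ∂ν = 0) (n : ℕ) :
    ∫ x, (∑ i, g (x i)) ^ 4 ∂Measure.pi (fun _ : Fin n => ν)
      = n * ∫ a, g a ^ 4 ∂ν + 3 * n * (n - 1) * (∫ a, g a ^ 2 ∂ν) ^ 2 := by
  induction n with
  | zero => simp
  | succ n ih =>
    rw [integral_sum_comp_succ_pow, integral_add_pow_four_prod (integrable_pow_of_abs_le hg hgc)
      (integrable_sum_comp_pow hg hgc n) hg0 (integral_sum_comp_eq_zero hg hgc hg0 n), ih,
      integral_sum_comp_sq hg hgc hg0]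
    push_cast
    ring

theorem measurable_sum_sub_sum (hg : Measurable g) (n : ℕ) :
    Measurable fun ω : (Fin n → α) × (Fin n → α) => ∑ i, g (ω.1 i) - ∑ i, g (ω.2 i) := by
  fun_prop

theorem integrable_sum_sub_sum_pow (hg : Measurable g) (hgc : ∀ a, |g a| ≤ c) (n k : ℕ) :
    Integrable (fun ω : (Fin n → α) × (Fin n → α) => (∑ i, g (ω.1 i) - ∑ i, g (ω.2 i)) ^ k)
      ((Measure.pi fun _ => ν).prod (Measure.pi fun _ => ν)) :=
  integrable_pow_of_abs_le (measurable_sum_sub_sum hg n)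
    (fun ω => abs_sum_sub_sum_le hgc ω.1 ω.2) k

theorem integral_sum_sub_sum_sq (hg : Measurable g) (hgc : ∀ a, |g a| ≤ c)
    (hg0 : ∫ a, g a ∂ν = 0) (n : ℕ) :
    ∫ ω, (∑ i, g (ω.1 i) - ∑ i, g (ω.2 i)) ^ 2
        ∂(Measure.pi fun _ : Fin n => ν).prod (Measure.pi fun _ : Fin n => ν)
      = 2 * n * ∫ a, g a ^ 2 ∂ν := by
  have hgc' : ∀ a, |(-g) a| ≤ c := by simpa using hgc
  have hg0' : ∫ a, (-g) a ∂ν = 0 := by simpa [integral_neg] using hg0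
  simp_rw [sum_sub_sum_eq_add_sum_neg]
  rw [integral_add_sq_prod (integrable_sum_comp_pow hg hgc n)
    (integrable_sum_comp_pow hg.neg hgc' n) (integral_sum_comp_eq_zero hg hgc hg0 n)
    (integral_sum_comp_eq_zero hg.neg hgc' hg0' n), integral_sum_comp_sq hg hgc hg0,
    integral_sum_comp_sq hg.neg hgc' hg0']
  simp only [Pi.neg_apply, even_two, Even.neg_pow]
  ring

theorem integral_sum_sub_sum_pow_four (hg : Measurable g) (hgc : ∀ a, |g a| ≤ c)
    (hg0 : ∫ a, g a ∂ν = 0) (n : ℕ) :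
    ∫ ω, (∑ i, g (ω.1 i) - ∑ i, g (ω.2 i)) ^ 4
        ∂(Measure.pi fun _ : Fin n => ν).prod (Measure.pi fun _ : Fin n => ν)
      = 2 * n * ∫ a, g a ^ 4 ∂ν + 6 * n * (2 * n - 1) * (∫ a, g a ^ 2 ∂ν) ^ 2 := by
  have hgc' : ∀ a, |(-g) a| ≤ c := by simpa using hgc
  have hg0' : ∫ a, (-g) a ∂ν = 0 := by simpa [integral_neg] using hg0
  simp_rw [sum_sub_sum_eq_add_sum_neg]
  rw [integral_add_pow_four_prod (integrable_sum_comp_pow hg hgc n)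
    (integrable_sum_comp_pow hg.neg hgc' n) (integral_sum_comp_eq_zero hg hgc hg0 n)
    (integral_sum_comp_eq_zero hg.neg hgc' hg0' n), integral_sum_comp_sq hg hgc hg0,
    integral_sum_comp_sq hg.neg hgc' hg0', integral_sum_comp_pow_four hg hgc hg0,
    integral_sum_comp_pow_four hg.neg hgc' hg0']
  simp only [Pi.neg_apply, even_two, Even.neg_pow, Even.neg_pow (show Even 4 by decide)]
  ring

end SampleSums

section MomentComparison

variable {Ω : Type*} [MeasurableSpace Ω] {μ : Measure Ω} {X : Ω → ℝ}

theorem sq_integral_abs_le_integral_sq [IsProbabilityMeasure μ] (hX : MemLp X 2 μ) :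
    (∫ ω, |X ω| ∂μ) ^ 2 ≤ ∫ ω, X ω ^ 2 ∂μ := by
  have h := variance_nonneg |X| μ
  rw [variance_eq_sub hX.abs] at h
  simpa [sq_abs] using h

-- `y ^ 4 - 3 t² y² + 2 t³ y = y (y - t)² (y + 2 t)`
theorem three_mul_sq_mul_sq_le {t y : ℝ} (ht : 0 ≤ t) (hy : 0 ≤ y) :
    3 * t ^ 2 * y ^ 2 ≤ 2 * t ^ 3 * y + y ^ 4 := by
  nlinarith [mul_nonneg (mul_nonneg hy (sq_nonneg (y - t))) (by positivity : 0 ≤ y + 2 * t)]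

theorem integral_sq_le_mul_sq_integral_abs (hX1 : Integrable X μ)
    (hX2 : Integrable (fun ω => X ω ^ 2) μ) (hX4 : Integrable (fun ω => X ω ^ 4) μ) {K : ℝ}
    (hK : 0 < K) (h : ∫ ω, X ω ^ 4 ∂μ ≤ K * (∫ ω, X ω ^ 2 ∂μ) ^ 2) :
    ∫ ω, X ω ^ 2 ∂μ ≤ K * (∫ ω, |X ω| ∂μ) ^ 2 := by
  set s := ∫ ω, X ω ^ 2 ∂μ
  set A := ∫ ω, |X ω| ∂μ
  have hs : 0 ≤ s := integral_nonneg fun ω => sq_nonneg _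
  rcases hs.eq_or_lt with hs0 | hs0
  · rw [← hs0]; positivity
  -- the scale at which the integrated form of `three_mul_sq_mul_sq_le` is sharpest
  set t := Real.sqrt (K * s)
  have ht2 : t ^ 2 = K * s := Real.sq_sqrt (by positivity)
  have hpt : ∀ ω, 3 * t ^ 2 * X ω ^ 2 ≤ 2 * t ^ 3 * |X ω| + X ω ^ 4 := fun ω => by
    rw [← sq_abs (X ω), ← (show Even 4 by decide).pow_abs (X ω)]
    exact three_mul_sq_mul_sq_le (Real.sqrt_nonneg _) (abs_nonneg _)
  have hint : 3 * t ^ 2 * s ≤ 2 * t ^ 3 * A + ∫ ω, X ω ^ 4 ∂μ := by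
    rw [← integral_const_mul, ← integral_const_mul, ← integral_add (hX1.abs.const_mul _) hX4]
    exact integral_mono (hX2.const_mul _) ((hX1.abs.const_mul _).add hX4) hpt
  have ht3 : t ^ 3 = K * s * t := by rw [pow_succ, ht2]
  rw [ht2, ht3] at hint
  have hsA : s ≤ t * A :=
    le_of_mul_le_mul_left (by nlinarith : K * s * s ≤ K * s * (t * A)) (by positivity)
  have hsA2 := pow_le_pow_left₀ hs hsA 2
  rw [mul_pow, ht2] at hsA2
  exact le_of_mul_le_mul_left (by nlinarith : s * s ≤ s * (K * A ^ 2)) hs0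

end MomentComparison

section Uniform

variable {ℓ : ℝ}

theorem isProbabilityMeasure_unif (hℓ : 0 < ℓ) : IsProbabilityMeasure (unif ℓ) := by
  constructor
  rw [unif, Measure.smul_apply, Measure.restrict_apply_univ, Real.volume_Icc, sub_zero,
    smul_eq_mul, ENNReal.inv_mul_cancel (by simpa using hℓ) ENNReal.ofReal_ne_top]

theorem ae_unif_mem_Icc : ∀ᵐ u ∂unif ℓ, u ∈ Set.Icc 0 ℓ :=
  Measure.ae_smul_measure (ae_restrict_mem measurableSet_Icc) _

theorem integral_unif (hℓ : 0 ≤ ℓ) (f : ℝ → ℝ) :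
    ∫ u, f u ∂unif ℓ = ℓ⁻¹ * ∫ u in Set.Icc 0 ℓ, f u := by
  rw [unif, integral_smul_measure, ENNReal.toReal_inv, ENNReal.toReal_ofReal hℓ, smul_eq_mul]

-- Equal to `u - ℓ / 2` on `[0, ℓ]`, where `unif ℓ` lives; the clamping makes it bounded.
noncomputable def centeredClamp (ℓ u : ℝ) : ℝ := max 0 (min u ℓ) - ℓ / 2

theorem measurable_centeredClamp : Measurable (centeredClamp ℓ) := by
  unfold centeredClamp
  fun_prop

theorem abs_centeredClamp_le (hℓ : 0 ≤ ℓ) (u : ℝ) : |centeredClamp ℓ u| ≤ ℓ / 2 := by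
  rw [centeredClamp, abs_le]
  constructor <;> linarith [le_max_left 0 (min u ℓ), max_le hℓ (min_le_right u ℓ)]

theorem centeredClamp_of_mem_Icc {u : ℝ} (hu : u ∈ Set.Icc 0 ℓ) :
    centeredClamp ℓ u = u - ℓ / 2 := by
  rw [centeredClamp, min_eq_left hu.2, max_eq_right hu.1]

theorem integral_centeredClamp_pow (hℓ : 0 < ℓ) (k : ℕ) :
    ∫ u, centeredClamp ℓ u ^ k ∂unif ℓ
      = ℓ⁻¹ * ((ℓ / 2) ^ (k + 1) - (-(ℓ / 2)) ^ (k + 1)) / (k + 1) := by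
  rw [integral_unif hℓ.le, setIntegral_congr_fun measurableSet_Icc fun u hu => by
      rw [centeredClamp_of_mem_Icc hu], integral_Icc_eq_integral_Ioc,
    ← intervalIntegral.integral_of_le hℓ.le, intervalIntegral.integral_comp_sub_right
      (fun u => u ^ k), integral_pow]
  ring_nf

theorem integral_centeredClamp (hℓ : 0 < ℓ) : ∫ u, centeredClamp ℓ u ∂unif ℓ = 0 := by
  simpa using integral_centeredClamp_pow hℓ 1

theorem integral_centeredClamp_sq (hℓ : 0 < ℓ) :
    ∫ u, centeredClamp ℓ u ^ 2 ∂unif ℓ = ℓ ^ 2 / 12 := by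
  rw [integral_centeredClamp_pow hℓ 2]
  field_simp
  ring

theorem integral_centeredClamp_pow_four (hℓ : 0 < ℓ) :
    ∫ u, centeredClamp ℓ u ^ 4 ∂unif ℓ = ℓ ^ 4 / 80 := by
  rw [integral_centeredClamp_pow hℓ 4]
  field_simp
  ring

end Uniform

section Matching

variable {n : ℕ}

noncomputable def matchingCost (x y : Fin n → ℝ) : ℝ :=
  ⨅ σ : Equiv.Perm (Fin n), ∑ i, |x i - y (σ i)|

theorem bddBelow_matchingCost (x y : Fin n → ℝ) :
    BddBelow (Set.range fun σ : Equiv.Perm (Fin n) => ∑ i, |x i - y (σ i)|) :=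
  ⟨0, Set.forall_mem_range.2 fun _ => sum_nonneg fun _ _ => abs_nonneg _⟩

theorem matchingCost_le (x y : Fin n → ℝ) (σ : Equiv.Perm (Fin n)) :
    matchingCost x y ≤ ∑ i, |x i - y (σ i)| :=
  ciInf_le (bddBelow_matchingCost x y) σ

theorem abs_sum_sub_sum_le_matchingCost (x y : Fin n → ℝ) :
    |∑ i, x i - ∑ i, y i| ≤ matchingCost x y :=
  le_ciInf fun σ => by
    rw [← Equiv.sum_comp σ y, ← sum_sub_distrib]
    exact abs_sum_le_sum_abs _ _

theorem matchingCost_nonneg (x y : Fin n → ℝ) : 0 ≤ matchingCost x y :=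
  (abs_nonneg _).trans (abs_sum_sub_sum_le_matchingCost x y)

theorem matchingCost_le_of_mem_Icc {ℓ : ℝ} {x y : Fin n → ℝ} (hx : ∀ i, x i ∈ Set.Icc 0 ℓ)
    (hy : ∀ i, y i ∈ Set.Icc 0 ℓ) : matchingCost x y ≤ n * ℓ :=
  calc matchingCost x y ≤ ∑ i, |x i - y i| := matchingCost_le x y 1
    _ ≤ ∑ _i : Fin n, ℓ := sum_le_sum fun i _ => by
        simpa using abs_sub_le_of_le_of_le (hx i).1 (hx i).2 (hy i).1 (hy i).2
    _ = n * ℓ := by simp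

theorem measurable_matchingCost :
    Measurable fun ω : (Fin n → ℝ) × (Fin n → ℝ) => matchingCost ω.1 ω.2 := by
  unfold matchingCost
  fun_prop

end Matching

section StepFunctions

noncomputable def stepLE (t u : ℝ) : ℝ := if u ≤ t then 1 else 0

@[fun_prop]
theorem Measurable.stepLE {β : Type*} [MeasurableSpace β] {f g : β → ℝ} (hf : Measurable f)
    (hg : Measurable g) : Measurable fun x => stepLE (f x) (g x) :=
  Measurable.ite (measurableSet_le hg hf) measurable_const measurable_const

theorem stepLE_mem_Icc (t u : ℝ) : stepLE t u ∈ Set.Icc 0 1 := by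
  unfold stepLE
  split_ifs <;> simp

theorem abs_stepLE_le (t u : ℝ) : |stepLE t u| ≤ 1 := by
  rw [abs_of_nonneg (stepLE_mem_Icc t u).1]
  exact (stepLE_mem_Icc t u).2

theorem abs_stepLE_sub_stepLE_le (t a b : ℝ) : |stepLE t a - stepLE t b| ≤ 1 := by
  simpa using abs_sub_le_of_le_of_le (stepLE_mem_Icc t a).1 (stepLE_mem_Icc t a).2
    (stepLE_mem_Icc t b).1 (stepLE_mem_Icc t b).2

theorem abs_stepLE_sub_stepLE_of_le {a b : ℝ} (hab : a ≤ b) (t : ℝ) :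
    |stepLE t a - stepLE t b| = (Set.Ico a b).indicator 1 t := by
  unfold stepLE
  by_cases hat : a ≤ t <;> by_cases hbt : b ≤ t
  · simp [hat, hbt]
  · simp [hat, hbt, Set.indicator_of_mem (show t ∈ Set.Ico a b from ⟨hat, not_le.1 hbt⟩)]
  · exact absurd (hab.trans hbt) hat
  · simp [hat, hbt]

theorem integral_abs_stepLE_sub_stepLE {ℓ a b : ℝ} (ha : a ∈ Set.Icc 0 ℓ)
    (hb : b ∈ Set.Icc 0 ℓ) : ∫ t in Set.Icc 0 ℓ, |stepLE t a - stepLE t b| = |a - b| := by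
  wlog hab : a ≤ b generalizing a b
  · simpa [abs_sub_comm] using this hb ha (le_of_not_ge hab)
  simp_rw [abs_stepLE_sub_stepLE_of_le hab]
  rw [integral_indicator_one measurableSet_Ico, measureReal_def,
    Measure.restrict_eq_self _ (Set.Ico_subset_Icc_self.trans (Set.Icc_subset_Icc ha.1 hb.2)),
    Real.volume_Ico, ENNReal.toReal_ofReal (sub_nonneg.2 hab), abs_sub_comm,
    abs_of_nonneg (sub_nonneg.2 hab)]

theorem lt_and_le_of_stepLE_lt_stepLE {t u v : ℝ} (h : stepLE t u < stepLE t v) :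
    t < u ∧ v ≤ t := by
  unfold stepLE at h
  by_cases hu : u ≤ t <;> by_cases hv : v ≤ t <;> norm_num [hu, hv] at h
  exact ⟨not_le.1 hu, hv⟩

theorem sum_abs_stepLE_sub_stepLE_of_monotone {n : ℕ} {a b : Fin n → ℝ} (ha : Monotone a)
    (hb : Monotone b) (t : ℝ) :
    ∑ i, |stepLE t (a i) - stepLE t (b i)| = |∑ i, (stepLE t (a i) - stepLE t (b i))| := by
  set d := fun i => stepLE t (a i) - stepLE t (b i)
  -- `d i > 0` means `a i ≤ t < b i` and `d j < 0` means `b j ≤ t < a j`: impossible together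
  have hsign : (∀ i, 0 ≤ d i) ∨ ∀ i, d i ≤ 0 := by
    by_contra! h
    obtain ⟨⟨i, hi⟩, ⟨j, hj⟩⟩ := h
    obtain ⟨hai, hbi⟩ := lt_and_le_of_stepLE_lt_stepLE (sub_neg.1 hi)
    obtain ⟨hbj, haj⟩ := lt_and_le_of_stepLE_lt_stepLE (sub_pos.1 hj)
    rcases le_total i j with hij | hij
    · exact (ha hij).not_gt (haj.trans_lt hai)
    · exact (hb hij).not_gt (hbi.trans_lt hbj)
  rcases hsign with h | h
  · rw [abs_sum_of_nonneg' h]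
    exact sum_congr rfl fun i _ => abs_of_nonneg (h i)
  · rw [← abs_neg, ← sum_neg_distrib, abs_sum_of_nonneg' fun i => neg_nonneg.2 (h i)]
    exact sum_congr rfl fun i _ => abs_of_nonpos (h i)

theorem integrable_abs_stepLE_sub_stepLE (μ : Measure ℝ) [IsFiniteMeasure μ] (a b : ℝ) :
    Integrable (fun t => |stepLE t a - stepLE t b|) μ :=
  .of_bound (by fun_prop) 1 (ae_of_all _ fun t => by
    simpa using abs_stepLE_sub_stepLE_le t a b)

end StepFunctions

theorem matchingCost_le_integral_abs_sum_stepLE {n : ℕ} {ℓ : ℝ} {x y : Fin n → ℝ}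
    (hx : ∀ i, x i ∈ Set.Icc 0 ℓ) (hy : ∀ i, y i ∈ Set.Icc 0 ℓ) :
    matchingCost x y ≤ ∫ t in Set.Icc 0 ℓ, |∑ i, (stepLE t (x i) - stepLE t (y i))| := by
  calc matchingCost x y ≤ ∑ i, |x i - y ((Tuple.sort y * (Tuple.sort x)⁻¹) i)| :=
        matchingCost_le x y _
    _ = ∑ j, |x (Tuple.sort x j) - y (Tuple.sort y j)| := by
      rw [← Equiv.sum_comp (Tuple.sort x)]
      simp
    _ = ∑ j, ∫ t in Set.Icc 0 ℓ,
          |stepLE t (x (Tuple.sort x j)) - stepLE t (y (Tuple.sort y j))| := by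
      simp_rw [integral_abs_stepLE_sub_stepLE (hx _) (hy _)]
    _ = ∫ t in Set.Icc 0 ℓ, ∑ j,
          |stepLE t (x (Tuple.sort x j)) - stepLE t (y (Tuple.sort y j))| :=
      (integral_finsetSum _ fun j _ => integrable_abs_stepLE_sub_stepLE _ _ _).symm
    _ = ∫ t in Set.Icc 0 ℓ, |∑ i, (stepLE t (x i) - stepLE t (y i))| := by
      refine integral_congr_ae (ae_of_all _ fun t =>
        (sum_abs_stepLE_sub_stepLE_of_monotone (Tuple.monotone_sort x) (Tuple.monotone_sort y)
          t).trans ?_)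
      simp only [Function.comp_apply, sum_sub_distrib,
        Equiv.sum_comp (Tuple.sort x) (fun i => stepLE t (x i)),
        Equiv.sum_comp (Tuple.sort y) (fun i => stepLE t (y i))]

theorem integral_abs_sum_stepLE_sub_le (ν : Measure ℝ) [IsProbabilityMeasure ν] (n : ℕ) (t : ℝ) :
    ∫ ω, |∑ i, (stepLE t (ω.1 i) - stepLE t (ω.2 i))|
        ∂(Measure.pi fun _ : Fin n => ν).prod (Measure.pi fun _ : Fin n => ν) ≤ √n / √2 := by
  set p := ∫ u, stepLE t u ∂ν
  set g := fun u => stepLE t u - p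
  have hstep : ∀ u, stepLE t u ∈ Set.Icc 0 1 := stepLE_mem_Icc t
  have hint : Integrable (stepLE t) ν :=
    .of_bound (by fun_prop) 1 (ae_of_all _ (abs_stepLE_le t))
  have hp : p ∈ Set.Icc 0 1 :=
    ⟨integral_nonneg fun u => (hstep u).1,
      (integral_mono hint (integrable_const 1) fun u => (hstep u).2).trans_eq (by simp)⟩
  have hg : Measurable g := by fun_prop
  have hgc : ∀ u, |g u| ≤ 1 := fun u => by
    simpa using abs_sub_le_of_le_of_le (hstep u).1 (hstep u).2 hp.1 hp.2
  have hg0 : ∫ u, g u ∂ν = 0 := by simp [g, p, integral_sub hint (integrable_const _)]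
  have hg2 : ∫ u, g u ^ 2 ∂ν ≤ 1 / 4 := by
    have := variance_le_sq_of_bounded (ae_of_all ν hstep) (by fun_prop)
    rw [variance_eq_integral (by fun_prop)] at this
    norm_num at this
    exact this
  have hD : ∀ ω : (Fin n → ℝ) × (Fin n → ℝ), ∑ i, (stepLE t (ω.1 i) - stepLE t (ω.2 i))
      = ∑ i, g (ω.1 i) - ∑ i, g (ω.2 i) := fun ω => by
    simp [g, sum_sub_distrib]
  simp_rw [hD]
  have hD2 := (memLp_two_iff_integrable_sq (measurable_sum_sub_sum hg n).aestronglyMeasurable).2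
    (integrable_sum_sub_sum_pow (ν := ν) hg hgc n 2)
  calc _ ≤ √(2 * n * ∫ u, g u ^ 2 ∂ν) := by
        rw [← integral_sum_sub_sum_sq hg hgc hg0]
        exact (le_abs_self _).trans (Real.abs_le_sqrt (sq_integral_abs_le_integral_sq hD2))
    _ ≤ √(n / 2) := Real.sqrt_le_sqrt (by nlinarith [(Nat.cast_nonneg n : (0 : ℝ) ≤ n)])
    _ = √n / √2 := Real.sqrt_div' _ zero_le_two

section MarketCost

variable {ℓ : ℝ}

theorem ae_forall_mem_Icc_unif (hℓ : 0 < ℓ) (n : ℕ) :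
    ∀ᵐ ω ∂(Measure.pi fun _ : Fin n => unif ℓ).prod (Measure.pi fun _ : Fin n => unif ℓ),
      (∀ i, ω.1 i ∈ Set.Icc 0 ℓ) ∧ ∀ i, ω.2 i ∈ Set.Icc 0 ℓ := by
  have := isProbabilityMeasure_unif hℓ
  have h : ∀ᵐ x ∂Measure.pi fun _ : Fin n => unif ℓ, ∀ i, x i ∈ Set.Icc 0 ℓ :=
    ae_all_iff.2 fun _ => Measure.tendsto_eval_ae_ae.eventually ae_unif_mem_Icc
  exact (Measure.quasiMeasurePreserving_fst.ae h).and (Measure.quasiMeasurePreserving_snd.ae h)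

theorem integral_matchingCost_le (hℓ : 0 < ℓ) (n : ℕ) :
    ∫ ω, matchingCost ω.1 ω.2
        ∂(Measure.pi fun _ : Fin n => unif ℓ).prod (Measure.pi fun _ : Fin n => unif ℓ)
      ≤ ℓ * √n / √2 := by
  have := isProbabilityMeasure_unif hℓ
  set N := fun (ω : (Fin n → ℝ) × (Fin n → ℝ)) (t : ℝ) =>
    |∑ i, (stepLE t (ω.1 i) - stepLE t (ω.2 i))|
  set μ := (Measure.pi fun _ : Fin n => unif ℓ).prod (Measure.pi fun _ : Fin n => unif ℓ)
  have hN : Integrable (Function.uncurry N) (μ.prod (volume.restrict (Set.Icc 0 ℓ))) := by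
    refine .of_bound (by fun_prop) (2 * n * 1) (ae_of_all _ fun z => ?_)
    simpa [N, Function.uncurry, sum_sub_distrib] using
      abs_sum_sub_sum_le (abs_stepLE_le z.2) z.1.1 z.1.2
  calc _ ≤ ∫ ω, (∫ t in Set.Icc 0 ℓ, N ω t) ∂μ := by
        refine integral_mono_of_nonneg (ae_of_all _ fun ω => matchingCost_nonneg ω.1 ω.2)
          hN.integral_prod_left ?_
        filter_upwards [ae_forall_mem_Icc_unif hℓ n] with ω hω
        exact matchingCost_le_integral_abs_sum_stepLE hω.1 hω.2
    _ = ∫ t in Set.Icc 0 ℓ, ∫ ω, N ω t ∂μ := integral_integral_swap hN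
    _ ≤ ∫ t in Set.Icc 0 ℓ, √n / √2 :=
        integral_mono hN.integral_prod_right (integrable_const _)
          (integral_abs_sum_stepLE_sub_le _ n)
    _ = ℓ * √n / √2 := by simp [hℓ.le, mul_div_assoc]

theorem integrable_matchingCost (hℓ : 0 < ℓ) (n : ℕ) :
    Integrable (fun ω : (Fin n → ℝ) × (Fin n → ℝ) => matchingCost ω.1 ω.2)
      ((Measure.pi fun _ : Fin n => unif ℓ).prod (Measure.pi fun _ : Fin n => unif ℓ)) := by
  have := isProbabilityMeasure_unif hℓ
  refine .of_bound measurable_matchingCost.aestronglyMeasurable (n * ℓ) ?_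
  filter_upwards [ae_forall_mem_Icc_unif hℓ n] with ω hω
  rw [Real.norm_of_nonneg (matchingCost_nonneg ω.1 ω.2)]
  exact matchingCost_le_of_mem_Icc hω.1 hω.2

theorem le_integral_matchingCost (hℓ : 0 < ℓ) (n : ℕ) :
    ℓ * √n / √18 ≤ ∫ ω, matchingCost ω.1 ω.2
        ∂(Measure.pi fun _ : Fin n => unif ℓ).prod (Measure.pi fun _ : Fin n => unif ℓ) := by
  have := isProbabilityMeasure_unif hℓ
  set μ := (Measure.pi fun _ : Fin n => unif ℓ).prod (Measure.pi fun _ : Fin n => unif ℓ)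
  set D := fun ω : (Fin n → ℝ) × (Fin n → ℝ) =>
    ∑ i, centeredClamp ℓ (ω.1 i) - ∑ i, centeredClamp ℓ (ω.2 i)
  have hgc := abs_centeredClamp_le hℓ.le
  have hDk := integrable_sum_sub_sum_pow (ν := unif ℓ) measurable_centeredClamp hgc n
  have hD2 : ∫ ω, D ω ^ 2 ∂μ = n * ℓ ^ 2 / 6 := by
    rw [integral_sum_sub_sum_sq measurable_centeredClamp hgc (integral_centeredClamp hℓ),
      integral_centeredClamp_sq hℓ]
    ring
  have hD4 : ∫ ω, D ω ^ 4 ∂μ ≤ 3 * (∫ ω, D ω ^ 2 ∂μ) ^ 2 := by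
    rw [integral_sum_sub_sum_pow_four measurable_centeredClamp hgc (integral_centeredClamp hℓ),
      integral_centeredClamp_sq hℓ, integral_centeredClamp_pow_four hℓ, hD2]
    nlinarith [pow_pos hℓ 4, (Nat.cast_nonneg n : (0 : ℝ) ≤ n)]
  have hDM : ∀ᵐ ω ∂μ, |D ω| ≤ matchingCost ω.1 ω.2 := by
    filter_upwards [ae_forall_mem_Icc_unif hℓ n] with ω hω
    simpa [D, centeredClamp_of_mem_Icc (hω.1 _), centeredClamp_of_mem_Icc (hω.2 _),
      sum_sub_distrib] using abs_sum_sub_sum_le_matchingCost ω.1 ω.2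
  have hD1 : Integrable D μ := by simpa using hDk 1
  have hmom := integral_sq_le_mul_sq_integral_abs hD1 (hDk 2) (hDk 4) three_pos hD4
  calc ℓ * √n / √18 ≤ ∫ ω, |D ω| ∂μ := by
        rw [← pow_le_pow_iff_left₀ (by positivity) (integral_nonneg fun _ => abs_nonneg _)
          two_ne_zero, div_pow, mul_pow, Real.sq_sqrt n.cast_nonneg, Real.sq_sqrt (by norm_num)]
        linarith
    _ ≤ ∫ ω, matchingCost ω.1 ω.2 ∂μ :=
        integral_mono_ae hD1.abs (integrable_matchingCost hℓ n) hDM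

end MarketCost

/-- For two independent samples of `n` i.i.d. uniform points on `[0,ℓ]` (riders and
drivers), the expected minimum cost of a perfect matching is `Θ(ℓ√n)`: there are constants
`C₁ ≥ C₂ > 0` such that for all `n ≥ 1` it lies in `[C₂ ℓ √n, C₁ ℓ √n]`. -/
theorem balanced_market_cost_theta :
    ∃ C₁ C₂ : ℝ, 0 < C₂ ∧ C₂ ≤ C₁ ∧ ∀ (n : ℕ) (ℓ : ℝ), 1 ≤ n → 0 < ℓ →
      C₂ * ℓ * Real.sqrt n ≤
        (∫ x : (Fin n → ℝ) × (Fin n → ℝ),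
          (⨅ σ : Equiv.Perm (Fin n), ∑ i, |x.1 i - x.2 (σ i)|)
          ∂((Measure.pi fun _ => unif ℓ).prod (Measure.pi fun _ => unif ℓ))) ∧
      (∫ x : (Fin n → ℝ) × (Fin n → ℝ),
          (⨅ σ : Equiv.Perm (Fin n), ∑ i, |x.1 i - x.2 (σ i)|)
          ∂((Measure.pi fun _ => unif ℓ).prod (Measure.pi fun _ => unif ℓ)))
        ≤ C₁ * ℓ * Real.sqrt n := by
  refine ⟨1 / √2, 1 / √18, by positivity, ?_, fun n ℓ _ hℓ => ⟨?_, ?_⟩⟩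
  · gcongr
    norm_num
  · exact (le_integral_matchingCost hℓ n).trans_eq' (by ring)
  · exact (integral_matchingCost_le hℓ n).trans_eq (by ring)
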